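/- arXiv:1212.0877 — 4 statements merged into one kernel-verified Lean document; each statement's English description precedes it below -/
import Mathlib

section
/- The function l ↦ √(2/π)·t·e^{-l²/(2t²)} - 2|l|·(1 - Φ(|l|/t)) is nonnegative and nonincreasing in |l| for every fixed t > 0, where Φ is the standard Gaussian CDF. -/
/-!
With `φ` the standard normal density, `√(2/π)·t·e^{-a²/(2t²)} = 2t·φ(a/t)`, so the function is
`2t·L(a/t)` for the normal loss function `L(x) = E[(Z - x)⁺] = φ(x) - x·(1 - Φ(x))`.
Because `∫_x^∞ u φ(u) du = φ(x)`, `L(x) = ∫_x^∞ (u - x) φ(u) du ≥ 0`, and because `φ' = -x φ`,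
the `φ` terms cancel in `L'(x) = -(1 - Φ(x)) ≤ 0`.
-/

open MeasureTheory Real

/-- Standard Gaussian cumulative distribution function. -/
noncomputable def Phi (t : ℝ) : ℝ := ∫ x in Set.Iic t, Real.exp (-x ^ 2 / 2) / Real.sqrt (2 * Real.pi)

open ProbabilityTheory Set Filter Topology

local notation "φ" => gaussianPDFReal 0 1

lemma gaussianPDFReal_zero_one (x : ℝ) : φ x = exp (-x ^ 2 / 2) / √(2 * π) := by
  simp [gaussianPDFReal, div_eq_inv_mul]

lemma integrable_mul_gaussianPDFReal_zero_one : Integrable fun u ↦ u * φ u := by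
  simpa [gaussianPDFReal_zero_one, mul_div_assoc', neg_div, div_eq_inv_mul _ (2 : ℝ)] using
    (integrable_mul_exp_neg_mul_sq (b := 1 / 2) (by norm_num)).div_const √(2 * π)

lemma continuous_gaussianPDFReal_zero_one : Continuous φ := by
  simp_rw [funext gaussianPDFReal_zero_one]
  fun_prop

lemma hasDerivAt_gaussianPDFReal_zero_one (x : ℝ) : HasDerivAt φ (-x * φ x) x := by
  simp_rw [funext gaussianPDFReal_zero_one]
  exact ((((hasDerivAt_id x).pow 2).neg.div_const 2).exp.div_const √(2 * π)).congr_deriv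
    (by simp; ring)

lemma tendsto_gaussianPDFReal_zero_one_atTop : Tendsto φ atTop (𝓝 0) := by
  simp_rw [funext gaussianPDFReal_zero_one]
  rw [← zero_div √(2 * π)]
  exact (tendsto_exp_atBot.comp <| (tendsto_neg_atTop_atBot.comp
    (tendsto_pow_atTop two_ne_zero)).atBot_div_const two_pos).div_const _

lemma integral_Ioi_mul_gaussianPDFReal_zero_one (x : ℝ) : ∫ u in Ioi x, u * φ u = φ x := by
  have := integral_Ioi_of_hasDerivAt_of_tendsto' (f := fun u ↦ -φ u) (a := x)
    (fun u _ ↦ (hasDerivAt_gaussianPDFReal_zero_one u).neg)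
    (by simpa using integrable_mul_gaussianPDFReal_zero_one.integrableOn)
    (by simpa using tendsto_gaussianPDFReal_zero_one_atTop.neg)
  simpa using this

lemma Phi_eq_integral (x : ℝ) : Phi x = ∫ u in Iic x, φ u := by
  simp [Phi, gaussianPDFReal_zero_one]

lemma one_sub_Phi_eq_integral (x : ℝ) : 1 - Phi x = ∫ u in Ioi x, φ u := by
  rw [Phi_eq_integral, ← integral_gaussianPDFReal_eq_one 0 one_ne_zero,
    ← intervalIntegral.integral_Iic_add_Ioi (integrable_gaussianPDFReal 0 1).integrableOn
      (integrable_gaussianPDFReal 0 1).integrableOn]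
  ring

lemma one_sub_Phi_nonneg (x : ℝ) : 0 ≤ 1 - Phi x := by
  rw [one_sub_Phi_eq_integral]
  exact setIntegral_nonneg measurableSet_Ioi fun u _ ↦ gaussianPDFReal_nonneg 0 1 u

lemma hasDerivAt_Phi (x : ℝ) : HasDerivAt Phi (φ x) x := by
  have hint := integrable_gaussianPDFReal 0 1
  have hPhi : Phi = fun y ↦ (∫ u in (0 : ℝ)..y, φ u) + Phi 0 := by
    ext y
    rw [Phi_eq_integral, Phi_eq_integral,
      ← intervalIntegral.integral_Iic_sub_Iic hint.integrableOn hint.integrableOn]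
    ring
  rw [hPhi]
  exact (intervalIntegral.integral_hasDerivAt_right hint.intervalIntegrable
    (continuous_gaussianPDFReal_zero_one.stronglyMeasurableAtFilter _ _)
    continuous_gaussianPDFReal_zero_one.continuousAt).add_const _

noncomputable def normalLoss (x : ℝ) : ℝ := φ x - x * (1 - Phi x)

lemma normalLoss_eq_integral (x : ℝ) : normalLoss x = ∫ u in Ioi x, (u - x) * φ u := by
  have hint := integrable_gaussianPDFReal 0 1
  simp_rw [sub_mul]
  rw [integral_sub integrable_mul_gaussianPDFReal_zero_one.integrableOn
    (hint.const_mul x).integrableOn, integral_const_mul,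
    integral_Ioi_mul_gaussianPDFReal_zero_one, ← one_sub_Phi_eq_integral, normalLoss]

lemma normalLoss_nonneg (x : ℝ) : 0 ≤ normalLoss x := by
  rw [normalLoss_eq_integral]
  exact setIntegral_nonneg measurableSet_Ioi fun u hu ↦
    mul_nonneg (sub_nonneg.2 hu.le) (gaussianPDFReal_nonneg 0 1 u)

lemma hasDerivAt_normalLoss (x : ℝ) : HasDerivAt normalLoss (-(1 - Phi x)) x := by
  have := (hasDerivAt_gaussianPDFReal_zero_one x).sub
    ((hasDerivAt_id x).mul ((hasDerivAt_Phi x).const_sub 1))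
  exact this.congr_deriv (by simp)

lemma normalLoss_antitone : Antitone normalLoss :=
  antitone_of_deriv_nonpos (fun x ↦ (hasDerivAt_normalLoss x).differentiableAt) fun x ↦ by
    simpa [(hasDerivAt_normalLoss x).deriv] using one_sub_Phi_nonneg x

lemma sqrt_two_div_pi_mul_exp_sub_eq_normalLoss {t : ℝ} (ht : t ≠ 0) (a : ℝ) :
    √(2 / π) * t * exp (-a ^ 2 / (2 * t ^ 2)) - 2 * a * (1 - Phi (a / t))
      = 2 * t * normalLoss (a / t) := by
  have hsqrt : √(2 / π) = 2 / √(2 * π) := by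
    rw [eq_div_iff (by positivity), ← sqrt_mul (by positivity),
      show 2 / π * (2 * π) = 2 ^ 2 by field_simp, sqrt_sq zero_le_two]
  rw [normalLoss, gaussianPDFReal_zero_one, hsqrt, div_pow, neg_div, neg_div, div_div,
    mul_comm (t ^ 2) 2]
  field_simp

/-- The function `g(a) = √(2/π)·t·e^{-a²/(2t²)} - 2a·(1-Φ(a/t))` is nonnegative and
nonincreasing for `a ≥ 0`, for every fixed `t > 0`. -/
theorem stmt_1 (t : ℝ) (ht : 0 < t) :
    (∀ a : ℝ, 0 ≤ a →
        0 ≤ Real.sqrt (2 / Real.pi) * t * Real.exp (-a ^ 2 / (2 * t ^ 2))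
            - 2 * a * (1 - Phi (a / t))) ∧
    (∀ a b : ℝ, 0 ≤ a → a ≤ b →
        Real.sqrt (2 / Real.pi) * t * Real.exp (-b ^ 2 / (2 * t ^ 2))
            - 2 * b * (1 - Phi (b / t)) ≤
          Real.sqrt (2 / Real.pi) * t * Real.exp (-a ^ 2 / (2 * t ^ 2))
            - 2 * a * (1 - Phi (a / t))) := by
  simp only [sqrt_two_div_pi_mul_exp_sub_eq_normalLoss ht.ne']
  refine ⟨fun a _ ↦ mul_nonneg (by positivity) (normalLoss_nonneg _), fun a b _ hab ↦ ?_⟩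
  exact mul_le_mul_of_nonneg_left (normalLoss_antitone (div_le_div_of_nonneg_right hab ht.le))
    (by positivity)
end

section
/- Let H be an n × m real matrix whose rows each have Euclidean norm at most √m, and fix t > 0 and l ∈ ℝⁿ. Then the function g(h) on row-entries defined by g = Σᵢ (|lᵢ + t·(Hv)ᵢ| - |lᵢ|) for a fixed unit vector v satisfies |g(a,t) - g(b,t)| ≤ t·√(mn)·‖a - b‖₂ when a, b are the generating sequences of two Toeplitz matrices; i.e., h ↦ Σᵢ |lᵢ + t(H(h)v)ᵢ| is Lipschitz in h with constant at most t√(mn). -/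
open MeasureTheory Real Finset

/-- The `n × m` Toeplitz matrix generated by a sequence `h ∈ ℝ^{n+m-1}`. -/
def toeplitz (n m : ℕ) (h : Fin (n + m - 1) → ℝ) : Matrix (Fin n) (Fin m) ℝ :=
  fun i j => h ⟨i.1 + j.1, by have := i.isLt; have := j.isLt; omega⟩

private def tidx (n m : ℕ) (i : Fin n) (j : Fin m) : Fin (n + m - 1) :=
  ⟨i.1 + j.1, by have := i.isLt; have := j.isLt; omega⟩

/-- The map `h ↦ Σᵢ (|lᵢ + t·(H(h)v)ᵢ| - |lᵢ|)` on generating sequences of Toeplitz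
matrices is Lipschitz with constant at most `t√(mn)` for a fixed unit vector `v`. -/
theorem stmt_3 (n m : ℕ) (t : ℝ) (ht : 0 < t) (l : Fin n → ℝ) (v : Fin m → ℝ)
    (hv : Real.sqrt (∑ j, v j ^ 2) = 1) (a b : Fin (n + m - 1) → ℝ) :
    |(∑ i, (|l i + t * (toeplitz n m a).mulVec v i| - |l i|)) -
        ∑ i, (|l i + t * (toeplitz n m b).mulVec v i| - |l i|)| ≤
      t * Real.sqrt (m * n) * Real.sqrt (∑ i, (a i - b i) ^ 2) := by
  set d : Fin (n + m - 1) → ℝ := fun k => a k - b k with hd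
  have hv2 : (∑ j, v j ^ 2) = 1 := by
    have h0 : (0:ℝ) ≤ ∑ j, v j ^ 2 := Finset.sum_nonneg fun j _ => sq_nonneg _
    nlinarith [Real.sq_sqrt h0, hv]
  set A := (toeplitz n m a).mulVec v with hAdef
  set B := (toeplitz n m b).mulVec v with hBdef
  have hAB : ∀ i, A i - B i = ∑ j, d (tidx n m i j) * v j := by
    intro i
    simp only [hAdef, hBdef, Matrix.mulVec, dotProduct, toeplitz, hd, tidx,
      ← Finset.sum_sub_distrib, sub_mul]
  -- Step 1: triangle inequality
  have step1 : |(∑ i, (|l i + t * A i| - |l i|)) - ∑ i, (|l i + t * B i| - |l i|)| ≤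
      t * ∑ i, |A i - B i| := by
    rw [← Finset.sum_sub_distrib]
    calc |∑ i, ((|l i + t * A i| - |l i|) - (|l i + t * B i| - |l i|))|
        ≤ ∑ i, |(|l i + t * A i| - |l i|) - (|l i + t * B i| - |l i|)| :=
          Finset.abs_sum_le_sum_abs _ _
      _ ≤ ∑ i, t * |A i - B i| := by
          apply Finset.sum_le_sum
          intro i _
          have h1 : (|l i + t * A i| - |l i|) - (|l i + t * B i| - |l i|) =
              |l i + t * A i| - |l i + t * B i| := by ring
          rw [h1]
          calc abs (|l i + t * A i| - |l i + t * B i|) ≤ |(l i + t * A i) - (l i + t * B i)| :=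
                abs_abs_sub_abs_le_abs_sub _ _
            _ = t * |A i - B i| := by
                rw [show (l i + t * A i) - (l i + t * B i) = t * (A i - B i) by ring,
                  abs_mul, abs_of_pos ht]
      _ = t * ∑ i, |A i - B i| := by rw [Finset.mul_sum]
  -- Step 2: Cauchy–Schwarz per row
  have step2 : ∀ i : Fin n, (A i - B i) ^ 2 ≤ ∑ j, d (tidx n m i j) ^ 2 := by
    intro i
    rw [hAB i]
    calc (∑ j, d (tidx n m i j) * v j) ^ 2
        ≤ (∑ j, d (tidx n m i j) ^ 2) * ∑ j, v j ^ 2 :=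
          Finset.sum_mul_sq_le_sq_mul_sq _ _ _
      _ = ∑ j, d (tidx n m i j) ^ 2 := by rw [hv2, mul_one]
  -- Step 3: counting bound
  have step3 : ∑ i : Fin n, ∑ j : Fin m, d (tidx n m i j) ^ 2 ≤ m * ∑ k, d k ^ 2 := by
    rw [Finset.sum_comm]
    calc ∑ j : Fin m, ∑ i : Fin n, d (tidx n m i j) ^ 2
        ≤ ∑ _j : Fin m, ∑ k, d k ^ 2 := by
          apply Finset.sum_le_sum
          intro j _
          have inj : ∀ i ∈ Finset.univ, ∀ i' ∈ Finset.univ,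
              tidx n m i j = tidx n m i' j → i = i' := by
            intro i _ i' _ h
            simp only [tidx, Fin.mk.injEq] at h
            exact Fin.ext (by omega)
          calc ∑ i : Fin n, d (tidx n m i j) ^ 2
              = ∑ k ∈ Finset.univ.image (fun i : Fin n => tidx n m i j), d k ^ 2 :=
                (Finset.sum_image (f := fun k => d k ^ 2) inj).symm
            _ ≤ ∑ k, d k ^ 2 :=
                Finset.sum_le_sum_of_subset_of_nonneg (Finset.subset_univ _)
                  (fun _ _ _ => sq_nonneg _)
      _ = m * ∑ k, d k ^ 2 := by simp [Finset.sum_const, nsmul_eq_mul]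
  -- Step 4: Cauchy–Schwarz on the outer sum
  have hS0 : (0:ℝ) ≤ ∑ i, |A i - B i| := Finset.sum_nonneg fun i _ => abs_nonneg _
  have step4 : (∑ i, |A i - B i|) ^ 2 ≤ n * ∑ i, (A i - B i) ^ 2 := by
    calc (∑ i, |A i - B i|) ^ 2 = (∑ i, |A i - B i| * 1) ^ 2 := by simp
      _ ≤ (∑ i, |A i - B i| ^ 2) * ∑ _i : Fin n, (1:ℝ) ^ 2 :=
          Finset.sum_mul_sq_le_sq_mul_sq _ _ _
      _ = (∑ i, (A i - B i) ^ 2) * n := by simp [sq_abs, Finset.sum_const, mul_comm]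
      _ = n * ∑ i, (A i - B i) ^ 2 := by ring
  have hsum : (∑ i, |A i - B i|) ^ 2 ≤ m * n * ∑ k, d k ^ 2 := by
    have h2 : ∑ i, (A i - B i) ^ 2 ≤ m * ∑ k, d k ^ 2 := by
      calc ∑ i, (A i - B i) ^ 2 ≤ ∑ i : Fin n, ∑ j : Fin m, d (tidx n m i j) ^ 2 :=
            Finset.sum_le_sum fun i _ => step2 i
        _ ≤ m * ∑ k, d k ^ 2 := step3
    have hn0 : (0:ℝ) ≤ (n:ℝ) := Nat.cast_nonneg n
    nlinarith [step4]
  have hfin : (∑ i, |A i - B i|) ≤ Real.sqrt (m * n) * Real.sqrt (∑ k, d k ^ 2) := by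
    rw [← Real.sqrt_mul (by positivity)]
    calc (∑ i, |A i - B i|) = Real.sqrt ((∑ i, |A i - B i|) ^ 2) :=
          (Real.sqrt_sq hS0).symm
      _ ≤ Real.sqrt (m * n * ∑ k, d k ^ 2) := Real.sqrt_le_sqrt hsum
  calc |(∑ i, (|l i + t * A i| - |l i|)) - ∑ i, (|l i + t * B i| - |l i|)|
      ≤ t * ∑ i, |A i - B i| := step1
    _ ≤ t * (Real.sqrt (m * n) * Real.sqrt (∑ k, d k ^ 2)) := by
        exact mul_le_mul_of_nonneg_left hfin ht.le
    _ = t * Real.sqrt (m * n) * Real.sqrt (∑ i, (a i - b i) ^ 2) := by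
        rw [hd]; ring
end

section
/- Let H be an n × m real matrix. The ℓ₁-minimization program min_x ‖y - Hx‖₁ recovers every x ∈ ℝᵐ from y = Hx + e for every error vector e supported on a set of size at most k if and only if for every nonzero z ∈ ℝᵐ and every index set K ⊆ {1,...,n} with |K| = k, ‖(Hz)_K‖₁ < ‖(Hz)_{K̄}‖₁, where K̄ = {1,...,n} \ K. -/
open Finset
open scoped Classical

/-- ℓ₁-minimization recovers every `x` from `y = Hx + e` for every `e` with support of size
at most `k` if and only if `‖(Hz)_K‖₁ < ‖(Hz)_K̄‖₁` for every nonzero `z` and every `K`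
with `|K| = k`. -/
theorem stmt_5 (n m k : ℕ) (H : Matrix (Fin n) (Fin m) ℝ) (hnm : m ≤ n) (hk : k ≤ n) :
    (∀ (x : Fin m → ℝ) (e : Fin n → ℝ),
        (Finset.univ.filter fun i => e i ≠ 0).card ≤ k →
        ∀ x' : Fin m → ℝ, x' ≠ x →
          (∑ i, |e i|) < ∑ i, |H.mulVec x i + e i - H.mulVec x' i|) ↔
      (∀ z : Fin m → ℝ, z ≠ 0 → ∀ K : Finset (Fin n), K.card = k →
        (∑ i ∈ K, |H.mulVec z i|) < ∑ i ∈ Kᶜ, |H.mulVec z i|) := by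
  constructor
  · intro h z hz K hK
    set e : Fin n → ℝ := fun i => if i ∈ K then -(H.mulVec z i) else 0 with he_def
    have hsupp : (Finset.univ.filter fun i => e i ≠ 0) ⊆ K := by
      intro i hi
      simp only [mem_filter, he_def] at hi
      by_contra hiK
      simp [hiK] at hi
    have hcard : (Finset.univ.filter fun i => e i ≠ 0).card ≤ k :=
      hK ▸ Finset.card_le_card hsupp
    have key := h z e hcard 0 (Ne.symm hz)
    have hL : (∑ i, |e i|) = ∑ i ∈ K, |H.mulVec z i| := by
      rw [← Finset.sum_add_sum_compl K fun i => |e i|]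
      have h1 : ∀ i ∈ K, |e i| = |H.mulVec z i| := by
        intro i hi; simp [he_def, hi]
      have h2 : ∀ i ∈ Kᶜ, |e i| = 0 := by
        intro i hi; simp only [Finset.mem_compl] at hi; simp [he_def, hi]
      rw [Finset.sum_congr rfl h1, Finset.sum_congr rfl h2]
      simp
    have hR : (∑ i, |H.mulVec z i + e i - H.mulVec 0 i|) = ∑ i ∈ Kᶜ, |H.mulVec z i| := by
      rw [← Finset.sum_add_sum_compl K fun i => |H.mulVec z i + e i - H.mulVec 0 i|]
      have h1 : ∀ i ∈ K, |H.mulVec z i + e i - H.mulVec 0 i| = 0 := by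
        intro i hi; simp [he_def, hi, Matrix.mulVec_zero]
      have h2 : ∀ i ∈ Kᶜ, |H.mulVec z i + e i - H.mulVec 0 i| = |H.mulVec z i| := by
        intro i hi; simp only [Finset.mem_compl] at hi
        simp [he_def, hi, Matrix.mulVec_zero]
      rw [Finset.sum_congr rfl h1, Finset.sum_congr rfl h2]
      simp
    rw [hL, hR] at key
    exact key
  · intro h x e hcard x' hne
    set z : Fin m → ℝ := x - x' with hz_def
    have hz : z ≠ 0 := sub_ne_zero.mpr hne.symm
    obtain ⟨K, hsub, -, hKcard⟩ :=
      Finset.exists_subsuperset_card_eq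
        (Finset.subset_univ (Finset.univ.filter fun i => e i ≠ 0)) hcard
        (by simpa using hk)
    have key := h z hz K hKcard
    have hzero : ∀ i ∈ Kᶜ, e i = 0 := by
      intro i hi
      simp only [Finset.mem_compl] at hi
      by_contra hi0
      exact hi (hsub (by simp [hi0]))
    have hmv : ∀ i, H.mulVec x i + e i - H.mulVec x' i = H.mulVec z i + e i := by
      intro i
      have : H.mulVec z = H.mulVec x - H.mulVec x' := by
        rw [hz_def, Matrix.mulVec_sub]
      rw [this]; simp; ring
    have hL : (∑ i, |e i|) = ∑ i ∈ K, |e i| := by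
      rw [← Finset.sum_add_sum_compl K fun i => |e i|]
      have hz0 : ∑ i ∈ Kᶜ, |e i| = 0 :=
        Finset.sum_eq_zero fun i hi => by rw [hzero i hi, abs_zero]
      rw [hz0, add_zero]
    have hR : (∑ i, |H.mulVec x i + e i - H.mulVec x' i|)
        = (∑ i ∈ K, |H.mulVec z i + e i|) + ∑ i ∈ Kᶜ, |H.mulVec z i| := by
      rw [← Finset.sum_add_sum_compl K fun i => |H.mulVec x i + e i - H.mulVec x' i|]
      congr 1
      · exact Finset.sum_congr rfl fun i _ => by rw [hmv]
      · exact Finset.sum_congr rfl fun i hi => by rw [hmv, hzero i hi, add_zero]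
    rw [hL, hR]
    have htri : ∀ i ∈ K, |e i| ≤ |H.mulVec z i + e i| + |H.mulVec z i| := by
      intro i _
      calc |e i| = |(H.mulVec z i + e i) - H.mulVec z i| := by ring_nf
        _ ≤ |H.mulVec z i + e i| + |H.mulVec z i| := abs_sub _ _
    calc ∑ i ∈ K, |e i| ≤ (∑ i ∈ K, |H.mulVec z i + e i|) + ∑ i ∈ K, |H.mulVec z i| := by
          rw [← Finset.sum_add_distrib]; exact Finset.sum_le_sum htri
      _ < (∑ i ∈ K, |H.mulVec z i + e i|) + ∑ i ∈ Kᶜ, |H.mulVec z i| := by linarith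
end

section
/- Suppose that for every vector v in a γ-net V of the unit sphere in ℝᵐ (with 0 < γ < 1), one has ‖(Hv)_K‖₁ ≤ ρ·S for all |K| ≤ βn, and (1-ε)S ≤ ‖Hv‖₁ ≤ (1+ε)S. Then for every unit vector z ∈ ℝᵐ and every |K| ≤ βn: Σ_{i∈K}|(Hz)ᵢ| ≤ ρ(1+ε')S/(1-γ) and Σᵢ|(Hz)ᵢ| ≥ S(1 - ε - γ(1+ε)/(1-γ)), where ρ = (1-δ)(1+ε)/(2-δ). -/
open Finset

/-- If the γ-net points satisfy `‖(Hv)_K‖₁ ≤ ρS` for all `|K| ≤ βn` and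
`(1-ε)S ≤ ‖Hv‖₁ ≤ (1+ε)S` with `ρ = (1-δ)(1+ε)/(2-δ)`, then every unit vector `z`
satisfies `Σ_{i∈K}|(Hz)ᵢ| ≤ ρS/(1-γ)` and `Σᵢ|(Hz)ᵢ| ≥ S(1-ε-γ(1+ε)/(1-γ))`. -/
theorem stmt_7 (n m : ℕ) (H : Matrix (Fin n) (Fin m) ℝ)
    (δ ε γ β S : ℝ) (hδ : 0 < δ) (hδ1 : δ < 1) (hε : 0 < ε) (hγ : 0 < γ) (hγ1 : γ < 1)
    (hβ : 0 < β) (hβ1 : β < 1) (hS : 0 < S)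
    (V : Finset (Fin m → ℝ))
    (hVsphere : ∀ v ∈ V, Real.sqrt (∑ j, v j ^ 2) = 1)
    (hVnet : ∀ z : Fin m → ℝ, Real.sqrt (∑ j, z j ^ 2) = 1 →
      ∃ v ∈ V, Real.sqrt (∑ j, (z j - v j) ^ 2) ≤ γ)
    (hK : ∀ v ∈ V, ∀ K : Finset (Fin n), (K.card : ℝ) ≤ β * n →
      (∑ i ∈ K, |H.mulVec v i|) ≤ (1 - δ) * (1 + ε) / (2 - δ) * S)
    (hlow : ∀ v ∈ V, (1 - ε) * S ≤ ∑ i, |H.mulVec v i|)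
    (hhigh : ∀ v ∈ V, (∑ i, |H.mulVec v i|) ≤ (1 + ε) * S) :
    ∀ z : Fin m → ℝ, Real.sqrt (∑ j, z j ^ 2) = 1 →
      (∀ K : Finset (Fin n), (K.card : ℝ) ≤ β * n →
        (∑ i ∈ K, |H.mulVec z i|) ≤ (1 - δ) * (1 + ε) / (2 - δ) * S / (1 - γ)) ∧
      S * (1 - ε - γ * (1 + ε) / (1 - γ)) ≤ ∑ i, |H.mulVec z i| := by
  intro z hz
  have hγ' : 0 < 1 - γ := by linarith
  set Sph : Set (Fin m → ℝ) := {w | ∑ j, w j ^ 2 = 1} with hSphdef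
  have hzS : z ∈ Sph := by
    have := hz; rwa [Real.sqrt_eq_one] at this
  have hne : Sph.Nonempty := ⟨z, hzS⟩
  have hsub : Sph ⊆ Metric.closedBall 0 1 := by
    intro w hw
    rw [Metric.mem_closedBall, dist_zero_right]
    rw [pi_norm_le_iff_of_nonneg zero_le_one]
    intro j
    rw [Real.norm_eq_abs, ← Real.sqrt_sq_eq_abs]
    calc Real.sqrt (w j ^ 2) ≤ Real.sqrt (∑ k, w k ^ 2) :=
          Real.sqrt_le_sqrt (Finset.single_le_sum (fun k _ => sq_nonneg (w k)) (mem_univ j))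
      _ = 1 := by rw [show (∑ k, w k ^ 2) = 1 from hw, Real.sqrt_one]
  have hclosed : IsClosed Sph := by
    have : Continuous fun w : Fin m → ℝ => ∑ j, w j ^ 2 :=
      continuous_finset_sum _ fun j _ => (continuous_apply j).pow 2
    exact isClosed_eq this continuous_const
  have hcomp : IsCompact Sph :=
    Metric.isCompact_of_isClosed_isBounded hclosed (Metric.isBounded_closedBall.subset hsub)
  have hcont : ∀ K : Finset (Fin n), Continuous fun w : Fin m → ℝ => ∑ i ∈ K, |H.mulVec w i| := by
    intro K
    apply continuous_finset_sum
    intro i _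
    have : Continuous fun w : Fin m → ℝ => H.mulVec w i := by
      simp only [Matrix.mulVec, dotProduct]
      exact continuous_finset_sum _ fun j _ => continuous_const.mul (continuous_apply j)
    exact this.abs
  -- maximizers on the sphere for each K
  choose c hcS hcmax using fun K : Finset (Fin n) =>
    hcomp.exists_isMaxOn hne ((hcont K).continuousOn)
  -- scaling lemma
  have key : ∀ (K : Finset (Fin n)) (w : Fin m → ℝ),
      (∑ i ∈ K, |H.mulVec w i|) ≤
        Real.sqrt (∑ j, w j ^ 2) * (∑ i ∈ K, |H.mulVec (c K) i|) := by
    intro K w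
    set t := Real.sqrt (∑ j, w j ^ 2) with htdef
    have hsum0 : 0 ≤ ∑ j, w j ^ 2 := Finset.sum_nonneg fun j _ => sq_nonneg _
    have ht0 : 0 ≤ t := Real.sqrt_nonneg _
    rcases eq_or_lt_of_le ht0 with h0 | hpos
    · -- t = 0, so w = 0
      have hsum : ∑ j, w j ^ 2 = 0 := by
        have := Real.sqrt_eq_zero'.mp h0.symm
        linarith
      have hw0 : ∀ j, w j = 0 := by
        intro j
        have := (Finset.sum_eq_zero_iff_of_nonneg (fun k _ => sq_nonneg (w k))).mp hsum j
          (mem_univ j)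
        exact (pow_eq_zero_iff two_ne_zero).mp this
      have : w = 0 := funext hw0
      subst this
      simp [Matrix.mulVec_zero, ← h0]
    · set u := t⁻¹ • w with hudef
      have ht2 : t ^ 2 = ∑ j, w j ^ 2 := Real.sq_sqrt hsum0
      have huS : u ∈ Sph := by
        show (∑ j, u j ^ 2) = 1
        have : ∀ j, u j ^ 2 = t⁻¹ ^ 2 * w j ^ 2 := by
          intro j; simp [hudef, mul_pow]
        rw [Finset.sum_congr rfl fun j _ => this j, ← Finset.mul_sum, ← ht2]
        field_simp
      have hwtu : w = t • u := by
        rw [hudef, smul_smul, mul_inv_cancel₀ (ne_of_gt hpos), one_smul]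
      have hmax := hcmax K huS
      calc (∑ i ∈ K, |H.mulVec w i|) = ∑ i ∈ K, |t * H.mulVec u i| := by
            rw [hwtu]
            refine Finset.sum_congr rfl fun i _ => ?_
            rw [Matrix.mulVec_smul]
            simp
        _ = t * ∑ i ∈ K, |H.mulVec u i| := by
            rw [Finset.mul_sum]
            exact Finset.sum_congr rfl fun i _ => by rw [abs_mul, abs_of_nonneg ht0]
        _ ≤ t * ∑ i ∈ K, |H.mulVec (c K) i| := by
            exact mul_le_mul_of_nonneg_left hmax ht0
  -- the global (full-sum) maximum A
  set A := ∑ i, |H.mulVec (c univ) i| with hAdef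
  have hA0 : 0 ≤ A := Finset.sum_nonneg fun i _ => abs_nonneg _
  -- A(1-γ) ≤ (1+ε)S
  have hAle : A ≤ (1 + ε) * S / (1 - γ) := by
    obtain ⟨v, hvV, hvd⟩ := hVnet (c univ) (by
      rw [Real.sqrt_eq_one]; exact hcS univ)
    have tri : A ≤ (∑ i, |H.mulVec v i|) + ∑ i, |H.mulVec (c univ - v) i| := by
      rw [← Finset.sum_add_distrib]
      refine Finset.sum_le_sum fun i _ => ?_
      have : H.mulVec (c univ) i = H.mulVec v i + H.mulVec (c univ - v) i := by
        rw [Matrix.mulVec_sub]; simp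
      rw [this]; exact abs_add_le _ _
    have h2 : ∑ i, |H.mulVec (c univ - v) i| ≤ γ * A := by
      calc ∑ i, |H.mulVec (c univ - v) i|
          ≤ Real.sqrt (∑ j, (c univ - v) j ^ 2) * A := key univ _
        _ ≤ γ * A := by
            apply mul_le_mul_of_nonneg_right _ hA0
            simpa [Pi.sub_apply] using hvd
    have h1 := hhigh v hvV
    rw [le_div_iff₀ hγ']
    nlinarith
  -- the set of admissible K's
  set T : Finset (Finset (Fin n)) :=
    univ.filter (fun K : Finset (Fin n) => (K.card : ℝ) ≤ β * n) with hTdef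
  have hTne : T.Nonempty := ⟨∅, by
    simp [hTdef]
    positivity⟩
  set B := T.sup' hTne (fun K => ∑ i ∈ K, |H.mulVec (c K) i|) with hBdef
  have hBle : B ≤ (1 - δ) * (1 + ε) / (2 - δ) * S / (1 - γ) := by
    obtain ⟨K₀, hK₀T, hK₀⟩ := Finset.exists_mem_eq_sup' hTne
      (fun K => ∑ i ∈ K, |H.mulVec (c K) i|)
    have hK₀card : (K₀.card : ℝ) ≤ β * n := by
      rw [hTdef] at hK₀T; exact (Finset.mem_filter.mp hK₀T).2
    obtain ⟨v, hvV, hvd⟩ := hVnet (c K₀) (by rw [Real.sqrt_eq_one]; exact hcS K₀)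
    have tri : (∑ i ∈ K₀, |H.mulVec (c K₀) i|) ≤
        (∑ i ∈ K₀, |H.mulVec v i|) + ∑ i ∈ K₀, |H.mulVec (c K₀ - v) i| := by
      rw [← Finset.sum_add_distrib]
      refine Finset.sum_le_sum fun i _ => ?_
      have : H.mulVec (c K₀) i = H.mulVec v i + H.mulVec (c K₀ - v) i := by
        rw [Matrix.mulVec_sub]; simp
      rw [this]; exact abs_add_le _ _
    have hAK0 : (∑ i ∈ K₀, |H.mulVec (c K₀) i|) ≤ B := by
      rw [hBdef]
      exact Finset.le_sup' (fun K => ∑ i ∈ K, |H.mulVec (c K) i|) hK₀T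
    have h2 : ∑ i ∈ K₀, |H.mulVec (c K₀ - v) i| ≤ γ * B := by
      calc ∑ i ∈ K₀, |H.mulVec (c K₀ - v) i|
          ≤ Real.sqrt (∑ j, (c K₀ - v) j ^ 2) * (∑ i ∈ K₀, |H.mulVec (c K₀) i|) := key K₀ _
        _ ≤ γ * B := by
            apply mul_le_mul _ hAK0 (Finset.sum_nonneg fun i _ => abs_nonneg _) hγ.le
            simpa [Pi.sub_apply] using hvd
    have h1 := hK v hvV K₀ hK₀card
    have hBeq : B = ∑ i ∈ K₀, |H.mulVec (c K₀) i| := hBdef.trans hK₀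
    rw [hBeq] at h2
    rw [hBeq, le_div_iff₀ hγ']
    nlinarith
  constructor
  · intro K hKcard
    have hKT : K ∈ T := by rw [hTdef]; exact Finset.mem_filter.mpr ⟨mem_univ _, hKcard⟩
    calc (∑ i ∈ K, |H.mulVec z i|) ≤ ∑ i ∈ K, |H.mulVec (c K) i| := hcmax K hzS
      _ ≤ B := by
          rw [hBdef]
          exact Finset.le_sup' (fun K => ∑ i ∈ K, |H.mulVec (c K) i|) hKT
      _ ≤ _ := hBle
  · obtain ⟨v, hvV, hvd⟩ := hVnet z hz
    have tri : (∑ i, |H.mulVec v i|) ≤ (∑ i, |H.mulVec z i|) + ∑ i, |H.mulVec (z - v) i| := by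
      rw [← Finset.sum_add_distrib]
      refine Finset.sum_le_sum fun i _ => ?_
      have hsub : H.mulVec (z - v) i = H.mulVec z i - H.mulVec v i := by
        rw [Matrix.mulVec_sub]; simp
      rw [hsub]
      calc |H.mulVec v i| = |H.mulVec z i - (H.mulVec z i - H.mulVec v i)| := by
            congr 1; ring
        _ ≤ |H.mulVec z i| + |H.mulVec z i - H.mulVec v i| := abs_sub _ _
    have h2 : ∑ i, |H.mulVec (z - v) i| ≤ γ * A := by
      calc ∑ i, |H.mulVec (z - v) i|
          ≤ Real.sqrt (∑ j, (z - v) j ^ 2) * A := key univ _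
        _ ≤ γ * A := by
            apply mul_le_mul_of_nonneg_right _ hA0
            simpa [Pi.sub_apply] using hvd
    have h1 := hlow v hvV
    have heq : S * (1 - ε - γ * (1 + ε) / (1 - γ)) =
        (1 - ε) * S - γ * ((1 + ε) * S / (1 - γ)) := by
      field_simp
    have h3 : γ * A ≤ γ * ((1 + ε) * S / (1 - γ)) :=
      mul_le_mul_of_nonneg_left hAle hγ.le
    linarith
end
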